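/- arXiv:math/0111044 — 2 statements merged into one kernel-verified Lean document; each statement's English description precedes it below -/
import Mathlib

section
/- Let (R, m) be a Noetherian local ring and I ⊆ m² an ideal of R. If the canonical projection R → R/I admits a ring homomorphism section, then I = 0. -/
/-!
Write `e = s ∘ π`; it is a ring endomorphism fixing `R` modulo `I`, so `a - e a ∈ I` for all `a`,
and `e` preserves every ideal containing `I`. For `a, b ∈ m` the identity
`a b - e(a b) = e(b) (a - e a) + a (b - e b)` shows `x - e x ∈ m I` for every `x ∈ m²`.
An element `x ∈ I ⊆ m²` has `e x = 0`, hence `I ⊆ m I`, and Nakayama's lemma gives `I = 0`.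
-/

namespace Ideal.Quotient

variable {R : Type*} [CommRing R] {I J : Ideal R} {s : R ⧸ I →+* R}

theorem sub_section_mk_mem (hs : (mk I).comp s = RingHom.id (R ⧸ I)) (a : R) :
    a - s (mk I a) ∈ I := by
  rw [← eq_zero_iff_mem, map_sub, ← RingHom.comp_apply, hs, RingHom.id_apply, sub_self]

theorem section_mk_mem_of_le (hs : (mk I).comp s = RingHom.id (R ⧸ I)) (hIJ : I ≤ J)
    {b : R} (hb : b ∈ J) : s (mk I b) ∈ J := by
  simpa using J.sub_mem hb (hIJ (sub_section_mk_mem hs b))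

theorem sub_section_mk_mem_mul_of_mem_sq (hs : (mk I).comp s = RingHom.id (R ⧸ I))
    (hIJ : I ≤ J) {x : R} (hx : x ∈ J ^ 2) : x - s (mk I x) ∈ J * I := by
  rw [pow_two] at hx
  refine Submodule.mul_induction_on hx (fun a ha b hb => ?_) (fun a b ha hb => ?_)
  · have hab : a * b - s (mk I (a * b)) =
        s (mk I b) * (a - s (mk I a)) + a * (b - s (mk I b)) := by
      rw [map_mul, map_mul]; ring
    rw [hab]
    exact add_mem (mul_mem_mul (section_mk_mem_of_le hs hIJ hb) (sub_section_mk_mem hs a))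
      (mul_mem_mul ha (sub_section_mk_mem hs b))
  · simpa only [map_add, add_sub_add_comm] using add_mem ha hb

theorem le_mul_of_le_sq (hs : (mk I).comp s = RingHom.id (R ⧸ I)) (hI : I ≤ J ^ 2) :
    I ≤ J * I := by
  intro x hx
  simpa [(eq_zero_iff_mem).mpr hx] using
    sub_section_mk_mem_mul_of_mem_sq hs (hI.trans (pow_le_self two_ne_zero)) (hI hx)

end Ideal.Quotient

/-- Let `(R, m)` be a Noetherian local ring and `I ⊆ m²` an ideal. If the canonical
projection `R → R/I` admits a ring homomorphism section, then `I = 0`. -/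
theorem stmt_0 (R : Type*) [CommRing R] [IsNoetherianRing R] [IsLocalRing R]
    (I : Ideal R) (hI : I ≤ (IsLocalRing.maximalIdeal R) ^ 2)
    (s : R ⧸ I →+* R) (hs : (Ideal.Quotient.mk I).comp s = RingHom.id (R ⧸ I)) :
    I = ⊥ :=
  Submodule.eq_bot_of_le_smul_of_le_jacobson_bot _ I (IsNoetherian.noetherian I)
    (Ideal.Quotient.le_mul_of_le_sq hs hI) (IsLocalRing.maximalIdeal_le_jacobson ⊥)
end

section
/- Fix n ≥ 1 and let S ⊆ ℕ^{2n} be the submonoid of exponent vectors a with Σ_{i=1}^{n} (a_{2i-1} + 2 a_{2i}) ≡ 0 (mod 3). Then S is generated as a monoid by the elements e*_{2i} + e*_{2j-1} (i, j ∈ {1,…,n}), e*_{2i} + e*_{2j} + e*_{2k} (i, j, k ∈ {1,…,n}), and e*_{2i-1} + e*_{2j-1} + e*_{2k-1} (i, j, k ∈ {1,…,n}), where e*_1, …, e*_{2n} is the standard basis of ℕ^{2n}. -/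
/-!
Weight the coordinates of `ℕ^{2n}` by `1` (index `2i`) and `2` (index `2i+1`); the monoid is then
`{a | 3 ∣ w ⬝ᵥ a}`, and every generator has weight `3` or `6`. Conversely, a nonzero `a` of weight
divisible by `3` dominates a generator `g`: if its support meets both weights, take `g = e_p + e_q`;
otherwise `w ⬝ᵥ a = c · |a|` for a single `c ∈ {1, 2}`, so `3 ∣ |a|` and any three units of `a` form a
generator. Strong induction on the weight of `a - g` finishes.
-/

open Finset Pi

section WeightedMod3

variable {ι : Type*} [DecidableEq ι]

def IsWeightTriple (w : ι → ℕ) (c : ℕ) (x : ι → ℕ) : Prop :=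
  ∃ p q r, w p = c ∧ w q = c ∧ w r = c ∧ x = single p 1 + single q 1 + single r 1

def mod3Generators (w : ι → ℕ) : Set (ι → ℕ) :=
  {x | (∃ p q, w p = 2 ∧ w q = 1 ∧ x = single p 1 + single q 1) ∨
    IsWeightTriple w 2 x ∨ IsWeightTriple w 1 x}

lemma exists_eq_single_add {a : ι → ℕ} {p : ι} (h : 0 < a p) :
    ∃ b, a = (single p 1 : ι → ℕ) + b := by
  refine ⟨a - single p 1, (add_tsub_cancel_of_le fun q => ?_).symm⟩
  rcases eq_or_ne q p with rfl | hq
  · simpa [Nat.one_le_iff_ne_zero, Nat.pos_iff_ne_zero] using h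
  · simp [hq]

variable [Fintype ι] {w : ι → ℕ}

lemma dotProduct_of_mem_mod3Generators {g : ι → ℕ} (hg : g ∈ mod3Generators w) :
    w ⬝ᵥ g = 3 ∨ w ⬝ᵥ g = 6 := by
  rcases hg with ⟨p, q, hp, hq, rfl⟩ | ⟨p, q, r, hp, hq, hr, rfl⟩ | ⟨p, q, r, hp, hq, hr, rfl⟩ <;>
    simp [dotProduct_add, dotProduct_single, *]

lemma closure_mod3Generators_subset :
    (AddSubmonoid.closure (mod3Generators w) : Set (ι → ℕ)) ⊆ {a | w ⬝ᵥ a % 3 = 0} := by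
  intro a ha
  induction ha using AddSubmonoid.closure_induction with
  | mem g hg => have := dotProduct_of_mem_mod3Generators hg; simp only [Set.mem_ofPred_eq]; omega
  | zero => simp
  | add x y _ _ hx hy => simp only [Set.mem_ofPred_eq, dotProduct_add] at *; omega

lemma exists_eq_single_add_of_lt_sum {a : ι → ℕ} {k : ℕ} (h : k < ∑ i, a i) :
    ∃ p b, a = (single p 1 : ι → ℕ) + b ∧ k ≤ ∑ i, b i := by
  obtain ⟨p, hp⟩ : ∃ p, 0 < a p := by
    by_contra! h0
    simp [fun p => Nat.le_zero.mp (h0 p)] at h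
  obtain ⟨b, rfl⟩ := exists_eq_single_add hp
  refine ⟨p, b, rfl, ?_⟩
  simp only [Pi.add_apply, sum_add_distrib, sum_pi_single', mem_univ, if_true] at h
  omega

lemma exists_isWeightTriple_add {a : ι → ℕ} {c : ℕ} (hc : c = 1 ∨ c = 2)
    (hca : ∀ p, 0 < a p → w p = c) (ha : w ⬝ᵥ a % 3 = 0) (ha0 : a ≠ 0) :
    ∃ g, IsWeightTriple w c g ∧ ∃ b, a = g + b := by
  have hdot : w ⬝ᵥ a = c * ∑ i, a i := by
    rw [mul_sum]
    refine sum_congr rfl fun p _ => ?_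
    rcases (a p).eq_zero_or_pos with h | h
    · simp [h]
    · rw [hca p h]
  have hpos : 0 < ∑ i, a i := by
    contrapose! ha0
    funext p
    exact sum_eq_zero_iff.mp (Nat.le_zero.mp ha0) p (mem_univ p)
  obtain ⟨p, b, rfl, hb⟩ :=
    exists_eq_single_add_of_lt_sum (a := a) (k := 2) (by rcases hc with rfl | rfl <;> omega)
  obtain ⟨q, b', rfl, hb'⟩ := exists_eq_single_add_of_lt_sum (k := 1) hb
  obtain ⟨r, d, rfl, -⟩ := exists_eq_single_add_of_lt_sum (k := 0) hb'
  exact ⟨_, ⟨p, q, r, hca p (by simp), hca q (by simp), hca r (by simp), rfl⟩, d, by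
    simp only [add_assoc]⟩

lemma exists_mem_mod3Generators_add (hw : ∀ p, w p = 1 ∨ w p = 2) {a : ι → ℕ}
    (ha : w ⬝ᵥ a % 3 = 0) (ha0 : a ≠ 0) : ∃ g ∈ mod3Generators w, ∃ b, a = g + b := by
  by_cases hmix : ∃ p q, w p = 2 ∧ w q = 1 ∧ 0 < a p ∧ 0 < a q
  · obtain ⟨p, q, hp, hq, hap, haq⟩ := hmix
    obtain ⟨b, rfl⟩ := exists_eq_single_add hap
    have hpq : q ≠ p := by rintro rfl; omega
    obtain ⟨d, rfl⟩ := exists_eq_single_add (a := b) (p := q) (by simpa [hpq] using haq)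
    exact ⟨_, Or.inl ⟨p, q, hp, hq, rfl⟩, d, (add_assoc _ _ _).symm⟩
  · by_cases h2 : ∃ p, w p = 2 ∧ 0 < a p
    · obtain ⟨p, hp, hap⟩ := h2
      have hca : ∀ q, 0 < a q → w q = 2 := fun q haq =>
        (hw q).resolve_left fun hq => hmix ⟨p, q, hp, hq, hap, haq⟩
      obtain ⟨g, hg, hag⟩ := exists_isWeightTriple_add (.inr rfl) hca ha ha0
      exact ⟨g, Or.inr (Or.inl hg), hag⟩
    · have hca : ∀ q, 0 < a q → w q = 1 := fun q haq =>
        (hw q).resolve_right fun hq => h2 ⟨q, hq, haq⟩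
      obtain ⟨g, hg, hag⟩ := exists_isWeightTriple_add (.inl rfl) hca ha ha0
      exact ⟨g, Or.inr (Or.inr hg), hag⟩

theorem closure_mod3Generators (hw : ∀ p, w p = 1 ∨ w p = 2) :
    (AddSubmonoid.closure (mod3Generators w) : Set (ι → ℕ)) = {a | w ⬝ᵥ a % 3 = 0} := by
  refine closure_mod3Generators_subset.antisymm fun a ha => ?_
  induction hN : w ⬝ᵥ a using Nat.strong_induction_on generalizing a with
  | _ N ih =>
    obtain rfl | ha0 := eq_or_ne a 0
    · exact zero_mem _
    obtain ⟨g, hg, b, rfl⟩ := exists_mem_mod3Generators_add hw ha ha0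
    have hg3 := dotProduct_of_mem_mod3Generators hg
    rw [Set.mem_ofPred_eq, dotProduct_add] at ha
    rw [dotProduct_add] at hN
    have hb : b ∈ {a | w ⬝ᵥ a % 3 = 0} := by simp only [Set.mem_ofPred_eq]; omega
    exact add_mem (AddSubmonoid.subset_closure hg) (ih _ (by omega) b hb rfl)

end WeightedMod3

def parityWeight (m : ℕ) (p : Fin m) : ℕ := p.val % 2 + 1

lemma parityWeight_eq_one_or_two {m : ℕ} (p : Fin m) :
    parityWeight m p = 1 ∨ parityWeight m p = 2 := by
  unfold parityWeight
  omega

section Interleaved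

variable {n : ℕ}

lemma parityWeight_eq_one_iff {p : Fin (2 * n)} :
    parityWeight (2 * n) p = 1 ↔ ∃ i : Fin n, ⟨2 * i.1, by omega⟩ = p := by
  refine ⟨fun hp => ⟨⟨p / 2, by omega⟩, ?_⟩, ?_⟩
  · ext
    simp only [parityWeight] at hp
    dsimp only
    omega
  · rintro ⟨i, rfl⟩
    simp [parityWeight]

lemma parityWeight_eq_two_iff {p : Fin (2 * n)} :
    parityWeight (2 * n) p = 2 ↔ ∃ i : Fin n, ⟨2 * i.1 + 1, by omega⟩ = p := by
  refine ⟨fun hp => ⟨⟨p / 2, by omega⟩, ?_⟩, ?_⟩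
  · ext
    simp only [parityWeight] at hp
    dsimp only
    omega
  · rintro ⟨i, rfl⟩
    simp [parityWeight, Nat.add_mod]

lemma sum_pairs_eq_parityWeight_dotProduct (a : Fin (2 * n) → ℕ) :
    ∑ i : Fin n, (a ⟨2 * i.1, by omega⟩ + 2 * a ⟨2 * i.1 + 1, by omega⟩) =
      parityWeight (2 * n) ⬝ᵥ a := by
  let e : Fin n × Fin 2 ≃ Fin (2 * n) := finProdFinEquiv.trans (finCongr (Nat.mul_comm n 2))
  rw [dotProduct, ← e.sum_comp, Fintype.sum_prod_type]
  refine sum_congr rfl fun i _ => ?_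
  have h0 : e (i, 0) = ⟨2 * i.1, by omega⟩ := by ext; simp [e]
  have h1 : e (i, 1) = ⟨2 * i.1 + 1, by omega⟩ := by ext; simp [e]; ring
  simp [Fin.sum_univ_two, h0, h1, parityWeight, Nat.add_mod]

end Interleaved

/-- The submonoid `S ⊆ ℕ^{2n}` of exponent vectors `a` with
`Σᵢ (a_{2i-1} + 2 a_{2i}) ≡ 0 (mod 3)` is generated as a monoid by the elements
`e*_{2i} + e*_{2j-1}`, `e*_{2i} + e*_{2j} + e*_{2k}` and `e*_{2i-1} + e*_{2j-1} + e*_{2k-1}`.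
(0-based: `e*_{2i}` is `Pi.single ⟨2i+1⟩ 1` and `e*_{2i-1}` is `Pi.single ⟨2i⟩ 1`.) -/
theorem stmt_5 (n : ℕ)
    (G : Set (Fin (2 * n) → ℕ))
    (hG : G = {x | (∃ i j : Fin n, x =
        Pi.single ⟨2 * i.1 + 1, by have := i.2; omega⟩ 1 +
        Pi.single ⟨2 * j.1, by have := j.2; omega⟩ 1) ∨
      (∃ i j k : Fin n, x =
        Pi.single ⟨2 * i.1 + 1, by have := i.2; omega⟩ 1 +
        Pi.single ⟨2 * j.1 + 1, by have := j.2; omega⟩ 1 +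
        Pi.single ⟨2 * k.1 + 1, by have := k.2; omega⟩ 1) ∨
      (∃ i j k : Fin n, x =
        Pi.single ⟨2 * i.1, by have := i.2; omega⟩ 1 +
        Pi.single ⟨2 * j.1, by have := j.2; omega⟩ 1 +
        Pi.single ⟨2 * k.1, by have := k.2; omega⟩ 1)}) :
    (AddSubmonoid.closure G : Set (Fin (2 * n) → ℕ)) =
      {a | (∑ i : Fin n, (a ⟨2 * i.1, by have := i.2; omega⟩ +
        2 * a ⟨2 * i.1 + 1, by have := i.2; omega⟩)) % 3 = 0} := by
  have hG' : G = mod3Generators (parityWeight (2 * n)) := by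
    subst hG
    ext x
    simp only [Set.mem_ofPred_eq, mod3Generators, IsWeightTriple, parityWeight_eq_one_iff,
      parityWeight_eq_two_iff, exists_and_left, exists_exists_eq_and]
  rw [hG', closure_mod3Generators parityWeight_eq_one_or_two]
  simp only [sum_pairs_eq_parityWeight_dotProduct]
end
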